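/- Let 0 < Y < 2, B > 0 and A ∈ ℝ with |A| < B, and define f(y) = e^{−(B²−A²)y/2} · J_Y(B²y) for y > 0, where J_Y(λ) = √(λ/(2π)) ∫_0^∞ e^{−λh/2} h^{(Y−1)/2} (1+h)^{−Y/2} dh. Then ∫_0^∞ y^{−(1+Y/2)} ( √(f(y)) − 1 )² dy < ∞. (This establishes that the CGMY time-change subordinator, whose Lévy density is f(y) times that of the one-sided stable Y/2 subordinator, is absolutely continuous with respect to the one-sided stable Y/2 subordinator.) -/

import Mathlib

/-!
Since `h^{(Y-1)/2} (1+h)^{-Y/2} = h^{-1/2} (h/(1+h))^{Y/2}`, the integrand of `J_Y` is dominated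
by that of `J_0`, which is a `Γ(1/2)` integral with `J_0 ≡ 1`, and the two differ by at most
`h^{-1/2}/(1+h)`, an integrable function. Hence `0 ≤ J_Y ≤ 1` and `1 - J_Y(λ) = O(√λ)`, so
`f(y) = e^{-(B²-A²)y/2} J_Y(B²y)` lies in `[0, 1]` with `1 - f(y) = O(√y)` as `y → 0`. Then
`(√f - 1)² ≤ (1 - f)²` is `O(y)` near `0` and at most `1` everywhere, and
`y^{-(1+Y/2)} (√f - 1)²` is integrable at both ends because `0 < Y/2 < 1`.
-/

open MeasureTheory Real Set

/-- `J_Y(λ) = √(λ/(2π)) ∫_0^∞ e^{-λh/2} h^{(Y-1)/2} (1+h)^{-Y/2} dh`. -/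
noncomputable def JFun (Y l : ℝ) : ℝ :=
  Real.sqrt (l / (2 * π)) *
    ∫ h in Ioi (0:ℝ), Real.exp (-(l * h / 2)) * h ^ ((Y-1)/2) * (1+h) ^ (-(Y/2))

noncomputable def JIntegrand (Y l h : ℝ) : ℝ :=
  exp (-(l * h / 2)) * h ^ ((Y - 1) / 2) * (1 + h) ^ (-(Y / 2))

lemma JFun_eq (Y l : ℝ) : JFun Y l = √(l / (2 * π)) * ∫ h in Ioi 0, JIntegrand Y l h := rfl

lemma JIntegrand_zero (l h : ℝ) :
    JIntegrand 0 l h = exp (-(l * h / 2)) * h ^ (-(1 : ℝ) / 2) := by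
  simp [JIntegrand]

lemma JIntegrand_eq_mul (Y l : ℝ) {h : ℝ} (hh : 0 < h) :
    JIntegrand Y l h = JIntegrand 0 l h * (h / (1 + h)) ^ (Y / 2) := by
  have h1 : 0 < 1 + h := by linarith
  rw [JIntegrand, JIntegrand_zero, div_rpow hh.le h1.le, rpow_neg h1.le,
    show (Y - 1) / 2 = -(1 : ℝ) / 2 + Y / 2 by ring, rpow_add hh]
  ring

lemma JIntegrand_nonneg (Y l : ℝ) {h : ℝ} (hh : 0 ≤ h) : 0 ≤ JIntegrand Y l h := by
  unfold JIntegrand; positivity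

lemma JIntegrand_le_JIntegrand_zero {Y : ℝ} (hY : 0 ≤ Y) (l : ℝ) {h : ℝ} (hh : 0 < h) :
    JIntegrand Y l h ≤ JIntegrand 0 l h := by
  have hx1 : h / (1 + h) ≤ 1 := by rw [div_le_one (by linarith)]; linarith
  rw [JIntegrand_eq_mul Y l hh]
  exact mul_le_of_le_one_right (JIntegrand_nonneg 0 l hh.le)
    (rpow_le_one (by positivity) hx1 (by linarith))

lemma JIntegrand_zero_sub_le {Y l : ℝ} (hY : Y ≤ 2) (hl : 0 ≤ l) {h : ℝ} (hh : 0 < h) :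
    JIntegrand 0 l h - JIntegrand Y l h ≤ h ^ (-(1 : ℝ) / 2) / (1 + h) := by
  have h1 : 0 < 1 + h := by linarith
  have hx1 : h / (1 + h) ≤ 1 := by rw [div_le_one h1]; linarith
  have hx : h / (1 + h) ≤ (h / (1 + h)) ^ (Y / 2) := by
    simpa using rpow_le_rpow_of_exponent_ge (by positivity) hx1 (by linarith : Y / 2 ≤ 1)
  have hexp : exp (-(l * h / 2)) ≤ 1 := exp_le_one_iff.mpr (by nlinarith)
  calc JIntegrand 0 l h - JIntegrand Y l h
      = JIntegrand 0 l h * (1 - (h / (1 + h)) ^ (Y / 2)) := by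
        rw [JIntegrand_eq_mul Y l hh]; ring
    _ ≤ JIntegrand 0 l h * (1 - h / (1 + h)) := by
        gcongr; exact JIntegrand_nonneg 0 l hh.le
    _ = exp (-(l * h / 2)) * (h ^ (-(1 : ℝ) / 2) / (1 + h)) := by
        rw [JIntegrand_zero]; field_simp; ring
    _ ≤ h ^ (-(1 : ℝ) / 2) / (1 + h) := mul_le_of_le_one_left (by positivity) hexp

lemma integrableOn_JIntegrand_zero {l : ℝ} (hl : 0 < l) :
    IntegrableOn (JIntegrand 0 l) (Ioi 0) := by
  refine (integrableOn_rpow_mul_exp_neg_mul_rpow (p := 1) (s := -(1 : ℝ) / 2) (b := l / 2)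
    (by norm_num) one_pos (by positivity)).congr_fun (fun h _ => ?_) measurableSet_Ioi
  simp only [JIntegrand_zero, rpow_one]
  ring_nf

lemma integrableOn_JIntegrand {Y l : ℝ} (hY : 0 ≤ Y) (hl : 0 < l) :
    IntegrableOn (JIntegrand Y l) (Ioi 0) := by
  refine (integrableOn_JIntegrand_zero hl).mono' (by unfold JIntegrand; fun_prop) ?_
  filter_upwards [ae_restrict_mem measurableSet_Ioi] with h hh
  rw [norm_of_nonneg (JIntegrand_nonneg Y l (le_of_lt hh))]
  exact JIntegrand_le_JIntegrand_zero hY l hh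

lemma JFun_zero {l : ℝ} (hl : 0 < l) : JFun 0 l = 1 := by
  have hΓ : ∫ h in Ioi (0 : ℝ), JIntegrand 0 l h =
      (1 / (l / 2)) ^ (1 / 2 : ℝ) * Gamma (1 / 2) := by
    rw [← integral_rpow_mul_exp_neg_mul_Ioi (by norm_num) (by positivity)]
    refine setIntegral_congr_fun measurableSet_Ioi (fun h _ => ?_)
    rw [JIntegrand_zero, show (1 : ℝ) / 2 - 1 = -1 / 2 by norm_num]
    ring_nf
  rw [JFun_eq, hΓ, Gamma_one_half_eq, ← sqrt_eq_rpow, ← sqrt_mul (by positivity),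
    ← sqrt_mul (by positivity), show l / (2 * π) * (1 / (l / 2) * π) = 1 by field_simp, sqrt_one]

lemma JFun_nonneg (Y l : ℝ) : 0 ≤ JFun Y l :=
  mul_nonneg (sqrt_nonneg _)
    (setIntegral_nonneg measurableSet_Ioi fun _ hh => JIntegrand_nonneg Y l (le_of_lt hh))

lemma JFun_le_one {Y l : ℝ} (hY : 0 ≤ Y) (hl : 0 < l) : JFun Y l ≤ 1 := by
  rw [← JFun_zero hl, JFun_eq, JFun_eq]
  refine mul_le_mul_of_nonneg_left ?_ (sqrt_nonneg _)
  exact setIntegral_mono_on (integrableOn_JIntegrand hY hl) (integrableOn_JIntegrand_zero hl)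
    measurableSet_Ioi fun h hh => JIntegrand_le_JIntegrand_zero hY l hh

lemma integrableOn_rpow_neg_half_div_one_add :
    IntegrableOn (fun h : ℝ => h ^ (-(1 : ℝ) / 2) / (1 + h)) (Ioi 0) := by
  rw [← Ioc_union_Ioi_eq_Ioi zero_le_one]
  have hmeas : Measurable fun h : ℝ => h ^ (-(1 : ℝ) / 2) / (1 + h) := by fun_prop
  refine IntegrableOn.union ?_ ?_
  · refine (intervalIntegral.intervalIntegrable_rpow' (a := 0) (b := 1) (r := -(1 : ℝ) / 2)
      (by norm_num)).1.mono' hmeas.aestronglyMeasurable ?_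
    filter_upwards [ae_restrict_mem measurableSet_Ioc] with h ⟨hh, _⟩
    rw [norm_of_nonneg (by positivity)]
    exact div_le_self (by positivity) (by linarith)
  · refine (integrableOn_Ioi_rpow_of_lt (a := -(3 : ℝ) / 2) (by norm_num) one_pos).mono'
      hmeas.aestronglyMeasurable ?_
    filter_upwards [ae_restrict_mem measurableSet_Ioi] with h (hh : 1 < h)
    have h0 : 0 < h := by linarith
    rw [norm_of_nonneg (by positivity), show -(3 : ℝ) / 2 = -1 / 2 + -1 by norm_num,
      rpow_add h0, rpow_neg_one, ← div_eq_mul_inv]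
    gcongr
    linarith

lemma exists_one_sub_JFun_le {Y : ℝ} (hY0 : 0 ≤ Y) (hY2 : Y ≤ 2) :
    ∃ C, ∀ l > 0, 1 - JFun Y l ≤ C * √l := by
  refine ⟨(∫ h in Ioi (0 : ℝ), h ^ (-(1 : ℝ) / 2) / (1 + h)) / √(2 * π), fun l hl => ?_⟩
  have hdiff : ∫ h in Ioi (0 : ℝ), (JIntegrand 0 l h - JIntegrand Y l h)
      ≤ ∫ h in Ioi (0 : ℝ), h ^ (-(1 : ℝ) / 2) / (1 + h) :=
    setIntegral_mono_on ((integrableOn_JIntegrand_zero hl).sub (integrableOn_JIntegrand hY0 hl))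
      integrableOn_rpow_neg_half_div_one_add measurableSet_Ioi
      fun h hh => JIntegrand_zero_sub_le hY2 hl.le hh
  calc 1 - JFun Y l
      = √(l / (2 * π)) * ∫ h in Ioi (0 : ℝ), (JIntegrand 0 l h - JIntegrand Y l h) := by
        rw [integral_sub (integrableOn_JIntegrand_zero hl) (integrableOn_JIntegrand hY0 hl),
          mul_sub, ← JFun_eq, ← JFun_eq, JFun_zero hl]
    _ ≤ √(l / (2 * π)) * ∫ h in Ioi (0 : ℝ), h ^ (-(1 : ℝ) / 2) / (1 + h) := by gcongr
    _ = _ := by rw [sqrt_div hl.le]; ring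

lemma setLIntegral_Ioi_rpow_mul_lt_top {α K : ℝ} (hα0 : 0 < α) (hα1 : α < 1) {φ : ℝ → ℝ}
    (hφ_lin : ∀ y ∈ Ioc (0 : ℝ) 1, φ y ≤ K * y) (hφ_one : ∀ y ∈ Ioi (1 : ℝ), φ y ≤ 1) :
    ∫⁻ y in Ioi 0, ENNReal.ofReal (y ^ (-(1 + α)) * φ y) < ⊤ := by
  rw [← Ioc_union_Ioi_eq_Ioi zero_le_one,
    lintegral_union measurableSet_Ioi (Ioc_disjoint_Ioi le_rfl)]
  refine ENNReal.add_lt_top.mpr ⟨?_, ?_⟩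
  · calc ∫⁻ y in Ioc 0 1, ENNReal.ofReal (y ^ (-(1 + α)) * φ y)
        ≤ ∫⁻ y in Ioc 0 1, ENNReal.ofReal (K * y ^ (-α)) := by
          refine setLIntegral_mono (by fun_prop) fun y hy => ENNReal.ofReal_le_ofReal ?_
          calc y ^ (-(1 + α)) * φ y ≤ y ^ (-(1 + α)) * (K * y) := by
                gcongr
                · exact rpow_nonneg hy.1.le _
                · exact hφ_lin y hy
            _ = K * y ^ (-α) := by
                rw [mul_left_comm, ← rpow_add_one hy.1.ne']
                ring_nf
      _ < ⊤ := by
          refine IntegrableOn.setLIntegral_lt_top (Integrable.const_mul ?_ K)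
          exact (intervalIntegral.intervalIntegrable_rpow' (by linarith)).1
  · calc ∫⁻ y in Ioi 1, ENNReal.ofReal (y ^ (-(1 + α)) * φ y)
        ≤ ∫⁻ y in Ioi 1, ENNReal.ofReal (y ^ (-(1 + α))) := by
          refine setLIntegral_mono (by fun_prop) fun y hy => ENNReal.ofReal_le_ofReal ?_
          exact mul_le_of_le_one_right (rpow_nonneg (by linarith [mem_Ioi.mp hy]) _) (hφ_one y hy)
      _ < ⊤ := (integrableOn_Ioi_rpow_of_lt (by linarith) one_pos).setLIntegral_lt_top

lemma sqrt_sub_one_sq_le_one_sub_sq {x : ℝ} (hx : 0 ≤ x) : (√x - 1) ^ 2 ≤ (1 - x) ^ 2 := by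
  nlinarith [sq_sqrt hx, mul_nonneg (sqrt_nonneg x) (sq_nonneg (√x - 1))]

noncomputable def cgmyDensityRatio (Y B A y : ℝ) : ℝ :=
  exp (-((B ^ 2 - A ^ 2) * y / 2)) * JFun Y (B ^ 2 * y)

lemma cgmyDensityRatio_nonneg (Y B A y : ℝ) : 0 ≤ cgmyDensityRatio Y B A y :=
  mul_nonneg (exp_pos _).le (JFun_nonneg _ _)

section cgmyDensityRatio

variable {Y B A y : ℝ}

lemma cgmyDensityRatio_le_one (hY : 0 ≤ Y) (hB : B ≠ 0) (hAB : A ^ 2 ≤ B ^ 2) (hy : 0 < y) :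
    cgmyDensityRatio Y B A y ≤ 1 :=
  mul_le_one₀ (exp_le_one_iff.mpr (by nlinarith)) (JFun_nonneg _ _)
    (JFun_le_one hY (by positivity))

lemma exists_one_sub_cgmyDensityRatio_le (hY0 : 0 ≤ Y) (hY2 : Y ≤ 2) (hB : B ≠ 0)
    (hAB : A ^ 2 ≤ B ^ 2) :
    ∃ M, ∀ y ∈ Ioc (0 : ℝ) 1, 1 - cgmyDensityRatio Y B A y ≤ M * √y := by
  obtain ⟨C, hC⟩ := exists_one_sub_JFun_le hY0 hY2
  refine ⟨(B ^ 2 - A ^ 2) / 2 + C * |B|, fun y ⟨hy0, hy1⟩ => ?_⟩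
  have hl : 0 < B ^ 2 * y := by positivity
  have hexp : 1 - (B ^ 2 - A ^ 2) / 2 * y ≤ exp (-((B ^ 2 - A ^ 2) * y / 2)) := by
    linarith [add_one_le_exp (-((B ^ 2 - A ^ 2) * y / 2))]
  have hexp1 : exp (-((B ^ 2 - A ^ 2) * y / 2)) ≤ 1 := exp_le_one_iff.mpr (by nlinarith)
  have hJ : 1 - JFun Y (B ^ 2 * y) ≤ C * |B| * √y := by
    rw [mul_assoc, ← sqrt_sq_eq_abs, ← sqrt_mul (sq_nonneg B)]
    exact hC _ hl
  have hJ1 : 0 ≤ 1 - JFun Y (B ^ 2 * y) := by linarith [JFun_le_one hY0 hl]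
  have hy : y ≤ √y := by
    rw [le_sqrt hy0.le hy0.le]; nlinarith
  calc 1 - cgmyDensityRatio Y B A y
      = (1 - exp (-((B ^ 2 - A ^ 2) * y / 2)))
        + exp (-((B ^ 2 - A ^ 2) * y / 2)) * (1 - JFun Y (B ^ 2 * y)) := by
        rw [cgmyDensityRatio]; ring
    _ ≤ (B ^ 2 - A ^ 2) / 2 * y + (1 - JFun Y (B ^ 2 * y)) := by
        gcongr
        · linarith
        · exact mul_le_of_le_one_left hJ1 hexp1
    _ ≤ ((B ^ 2 - A ^ 2) / 2 + C * |B|) * √y := by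
        have : (B ^ 2 - A ^ 2) / 2 * y ≤ (B ^ 2 - A ^ 2) / 2 * √y :=
          mul_le_mul_of_nonneg_left hy (by linarith)
        linarith

end cgmyDensityRatio

theorem cgmy_subordinator_absolutely_continuous (Y B A : ℝ) (hY0 : 0 < Y) (hY2 : Y < 2)
    (hB : 0 < B) (hAB : |A| < B) :
    ∫⁻ y in Ioi (0:ℝ),
        ENNReal.ofReal (y ^ (-(1 + Y/2)) *
          (Real.sqrt (Real.exp (-((B^2 - A^2) * y / 2)) * JFun Y (B^2 * y)) - 1)^2) < ⊤ := by
  have hA : A ^ 2 ≤ B ^ 2 := sq_le_sq.mpr (by rw [abs_of_pos hB]; exact hAB.le)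
  obtain ⟨M, hM⟩ := exists_one_sub_cgmyDensityRatio_le hY0.le hY2.le hB.ne' hA
  refine setLIntegral_Ioi_rpow_mul_lt_top (K := M ^ 2)
    (φ := fun y => (√(cgmyDensityRatio Y B A y) - 1) ^ 2) (by linarith) (by linarith)
    (fun y hy => ?_) (fun y hy => ?_)
  · calc (√(cgmyDensityRatio Y B A y) - 1) ^ 2 ≤ (1 - cgmyDensityRatio Y B A y) ^ 2 :=
          sqrt_sub_one_sq_le_one_sub_sq (cgmyDensityRatio_nonneg Y B A y)
      _ ≤ (M * √y) ^ 2 := by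
          gcongr
          · linarith [cgmyDensityRatio_le_one hY0.le hB.ne' hA hy.1]
          · exact hM y hy
      _ = M ^ 2 * y := by rw [mul_pow, sq_sqrt hy.1.le]
  · have hf0 := cgmyDensityRatio_nonneg Y B A y
    have hf1 := cgmyDensityRatio_le_one hY0.le hB.ne' hA (zero_lt_one.trans hy)
    nlinarith [sqrt_sub_one_sq_le_one_sub_sq hf0]
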